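/- Fix integers n ≥ 1, 0 ≤ q ≤ n and 1 ≤ j₁ < … < j_q ≤ n, set p = n + 1 − q, and let φ_{n,j₁…j_q} ∈ ℚ[[x_{i,l} : 1 ≤ i ≤ p, l ∈ ℤⁿ]] be the power series determined by the compatible system (φ^{(M′,d)}) described in the context. Assign to the variable x_{i,l} the weight l ∈ ℤⁿ and to a monomial ∏ x_{i,l}^{e_{i,l}} the weight Σ e_{i,l}·l ∈ ℤⁿ. Then every monomial occurring with nonzero coefficient in φ_{n,j₁…j_q} has weight 0 ∈ ℤⁿ. -/

import Mathlib

noncomputable section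

open scoped Classical TensorProduct

/-- Iterated Laurent series carrier together with its ring structure. -/
def IterAux (A : Type) [CommRing A] : ℕ → (T : Type) × CommRing T
  | 0 => ⟨A, inferInstance⟩
  | n+1 =>
    letI := (IterAux A n).2
    ⟨LaurentSeries (IterAux A n).1, inferInstance⟩

/-- `IterLaurent A n = A((t₁))…((tₙ))`, the ring of iterated Laurent series:
`IterLaurent A 0 = A` and `IterLaurent A (n+1) = (IterLaurent A n)((t_{n+1}))`. -/
def IterLaurent (A : Type) [CommRing A] (n : ℕ) : Type := (IterAux A n).1

instance iterLaurentCommRing (A : Type) [CommRing A] (n : ℕ) : CommRing (IterLaurent A n) :=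
  (IterAux A n).2

/-- View an iterated Laurent series as a Laurent series over the previous stage. -/
def IterLaurent.down {A : Type} [CommRing A] {n : ℕ} (f : IterLaurent A (n+1)) :
    LaurentSeries (IterLaurent A n) := f

/-- View a Laurent series over the previous stage as an iterated Laurent series. -/
def IterLaurent.up {A : Type} [CommRing A] {n : ℕ} (f : LaurentSeries (IterLaurent A n)) :
    IterLaurent A (n+1) := f

/-- The coefficient of `t^l = t₁^{l₁}⋯tₙ^{lₙ}` in an iterated Laurent series. -/
def iterCoeff (A : Type) [CommRing A] : {n : ℕ} → IterLaurent A n → (Fin n → ℤ) → A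
  | 0, f, _ => f
  | n+1, f, l => iterCoeff A (f.down.coeff (l (Fin.last n))) (fun i => l i.castSucc)

/-- The lexicographic order on `ℤⁿ` "from the last coordinate":
`l < l'` iff `lₙ < l'ₙ`, or `lₙ = l'ₙ` and `(l₁,…,l_{n-1}) < (l'₁,…,l'_{n-1})`. -/
def lexLt : {n : ℕ} → (Fin n → ℤ) → (Fin n → ℤ) → Prop
  | 0, _, _ => False
  | n+1, a, b => a (Fin.last n) < b (Fin.last n) ∨
      (a (Fin.last n) = b (Fin.last n) ∧
        lexLt (fun i => a i.castSucc) (fun i => b i.castSucc))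

/-- The monomial `t^l = t₁^{l₁} ⋯ tₙ^{lₙ}`. -/
def tpow (A : Type) [CommRing A] : {n : ℕ} → (Fin n → ℤ) → IterLaurent A n
  | 0, _ => 1
  | n+1, l => IterLaurent.up
      (HahnSeries.single (l (Fin.last n)) (tpow A (fun i => l i.castSucc)))

/-- Constant series, as a ring homomorphism `A →+* A((t₁))…((tₙ))`. -/
def iterC (A : Type) [CommRing A] : (n : ℕ) → A →+* IterLaurent A n
  | 0 => RingHom.id A
  | n+1 => (HahnSeries.C : (IterLaurent A n) →+* LaurentSeries (IterLaurent A n)).comp (iterC A n)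

/-- The truncation `f₋ = Σ_{l<0} coeff_l(f) t^l` (strictly negative part w.r.t. the
lexicographic order from the last coordinate). -/
def truncNeg (A : Type) [CommRing A] : {n : ℕ} → IterLaurent A n → IterLaurent A n
  | 0, _ => 0
  | n+1, f => IterLaurent.up
      { coeff := fun k =>
          if k < 0 then f.down.coeff k else if k = 0 then truncNeg A (f.down.coeff 0) else 0
        isPWO_support' := by
          refine (f.down.isPWO_support.union (Set.finite_singleton 0).isPWO).mono ?_
          intro k hk
          simp only [Function.mem_support] at hk
          rcases lt_trichotomy k 0 with h | h | h
          · left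
            simp only [if_pos h] at hk
            exact hk
          · right; simp [h]
          · exfalso; apply hk; rw [if_neg (not_lt.2 h.le), if_neg h.ne'] }

/-- The truncation `f_{≤0} = Σ_{l≤0} coeff_l(f) t^l` (nonpositive part). -/
def truncNonpos (A : Type) [CommRing A] : {n : ℕ} → IterLaurent A n → IterLaurent A n
  | 0, f => f
  | n+1, f => IterLaurent.up
      { coeff := fun k =>
          if k < 0 then f.down.coeff k else if k = 0 then truncNonpos A (f.down.coeff 0) else 0
        isPWO_support' := by
          refine (f.down.isPWO_support.union (Set.finite_singleton 0).isPWO).mono ?_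
          intro k hk
          simp only [Function.mem_support] at hk
          rcases lt_trichotomy k 0 with h | h | h
          · left
            simp only [if_pos h] at hk
            exact hk
          · right; simp [h]
          · exfalso; apply hk; rw [if_neg (not_lt.2 h.le), if_neg h.ne'] }

/-- `V₊(A)`: iterated Laurent series with constant term `1` and no nonzero
coefficients below `0`. -/
def MemVplus (A : Type) [CommRing A] {n : ℕ} (f : IterLaurent A n) : Prop :=
  iterCoeff A f 0 = 1 ∧ ∀ l, lexLt l 0 → iterCoeff A f l = 0

/-- `V₋(A)`: iterated Laurent series with constant term `1`, no nonzero coefficients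
above `0`, and `f - 1` nilpotent in `Lⁿ(A)`. -/
def MemVminus (A : Type) [CommRing A] {n : ℕ} (f : IterLaurent A n) : Prop :=
  iterCoeff A f 0 = 1 ∧ (∀ l, lexLt 0 l → iterCoeff A f l = 0) ∧ IsNilpotent (f - 1)

/-- `(Lⁿ𝔾ₘ)⁰(A)`: invertible constant term and nilpotent strictly negative part. -/
def MemZeroMul (A : Type) [CommRing A] {n : ℕ} (f : IterLaurent A n) : Prop :=
  IsUnit (iterCoeff A f 0) ∧ IsNilpotent (truncNeg A f)

/-- `(Lⁿ𝔾ₘ)^♯(A)`: constant term `1 + nilpotent` and nilpotent strictly negative part. -/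
def MemSharpMul (A : Type) [CommRing A] {n : ℕ} (f : IterLaurent A n) : Prop :=
  IsNilpotent (iterCoeff A f 0 - 1) ∧ IsNilpotent (truncNeg A f)

/-- `(Lⁿ𝔾ₐ)^♯(A)`: nilpotent nonpositive part. -/
def MemSharpAdd (A : Type) [CommRing A] {n : ℕ} (g : IterLaurent A n) : Prop :=
  IsNilpotent (truncNonpos A g)

/-- The residue: the coefficient of `t₁⁻¹⋯tₙ⁻¹`. -/
def iterRes (A : Type) [CommRing A] {n : ℕ} (f : IterLaurent A n) : A :=
  iterCoeff A f (fun _ => -1)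

/-- The derivative with respect to the outer Laurent variable:
`coeff k ↦ (k+1) • coeff (k+1)`. -/
def hahnDerivHom (B : Type) [CommRing B] : LaurentSeries B →+ LaurentSeries B where
  toFun f :=
    { coeff := fun k => (k + 1) • f.coeff (k + 1)
      isPWO_support' := by
        have himg : (Function.support fun k : ℤ => (k + 1) • f.coeff (k + 1)) ⊆
            (fun k : ℤ => k - 1) '' f.support := by
          intro k hk
          simp only [Function.mem_support] at hk
          refine ⟨k + 1, ?_, by ring⟩
          intro h0
          apply hk
          rw [h0, smul_zero]
        exact (f.isPWO_support.image_of_monotone (fun a b hab => by omega)).mono himg }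
  map_zero' := by ext k; simp
  map_add' f g := by ext k; simp [smul_add]

/-- Coefficientwise application of an additive map, on Laurent series. -/
def hahnMapHom {B C : Type} [CommRing B] [CommRing C] (φ : B →+ C) :
    HahnSeries ℤ B →+ HahnSeries ℤ C where
  toFun f := f.map φ
  map_zero' := by ext; simp
  map_add' f g := by ext; simp

/-- The formal partial derivative `∂/∂tⱼ` as an additive map: it is characterized by
`coeff_l (∂f/∂tⱼ) = (lⱼ + 1) • coeff_{l + eⱼ} f`. -/
def pderivHom (A : Type) [CommRing A] : {n : ℕ} → Fin n → (IterLaurent A n →+ IterLaurent A n)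
  | 0, j => j.elim0
  | n+1, j =>
    show HahnSeries ℤ (IterLaurent A n) →+ HahnSeries ℤ (IterLaurent A n) from
    if h : (j : ℕ) < n then
      hahnMapHom (B := IterLaurent A n) (C := IterLaurent A n) (pderivHom A (⟨j, h⟩ : Fin n))
    else hahnDerivHom (IterLaurent A n)

/-- The formal partial derivative `∂f/∂tⱼ` of an iterated Laurent series. -/
def pderivIter (A : Type) [CommRing A] {n : ℕ} (j : Fin n) (f : IterLaurent A n) :
    IterLaurent A n := pderivHom A j f

/-- Coefficientwise application of a ring homomorphism, on Laurent series. -/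
def hahnMapRingHom {B C : Type} [CommRing B] [CommRing C] (φ : B →+* C) :
    HahnSeries ℤ B →+* HahnSeries ℤ C where
  toFun f := f.map φ
  map_one' := by
    ext g
    by_cases h : g = 0 <;> simp [h]
  map_mul' x y := by
    have h := HahnSeries.map_mul (Γ := ℤ) (f := (φ : B →ₙ+* C)) (x := x) (y := y)
    ext g
    have := congrArg (fun z : HahnSeries ℤ C => z.coeff g) h
    exact this
  map_zero' := by ext; simp
  map_add' x y := by ext; simp

/-- The ring homomorphism `Lⁿ(A) →+* Lⁿ(B)` induced by `σ : A →+* B`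
(functoriality of iterated Laurent series). -/
def iterMap {A B : Type} [CommRing A] [CommRing B] (σ : A →+* B) :
    (n : ℕ) → (IterLaurent A n →+* IterLaurent B n)
  | 0 => σ
  | n+1 =>
    show HahnSeries ℤ (IterLaurent A n) →+* HahnSeries ℤ (IterLaurent B n) from
    hahnMapRingHom (B := IterLaurent A n) (C := IterLaurent B n) (iterMap σ n)

theorem tpow_zero (A : Type) [CommRing A] : ∀ {n : ℕ}, tpow A (0 : Fin n → ℤ) = 1
  | 0 => rfl
  | n+1 => by
    show IterLaurent.up (HahnSeries.single ((0 : Fin (n+1) → ℤ) (Fin.last n))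
      (tpow A fun i => (0 : Fin (n+1) → ℤ) i.castSucc)) = 1
    have h1 : (fun i : Fin n => (0 : Fin (n+1) → ℤ) i.castSucc) = (0 : Fin n → ℤ) := rfl
    rw [h1, tpow_zero A]
    exact congrArg IterLaurent.up (HahnSeries.single_zero_one)

theorem tpow_mul_tpow (A : Type) [CommRing A] :
    ∀ {n : ℕ} (l l' : Fin n → ℤ), tpow A l * tpow A l' = tpow A (l + l')
  | 0, _, _ => one_mul 1
  | n+1, l, l' => by
    show IterLaurent.up (HahnSeries.single (l (Fin.last n)) (tpow A fun i => l i.castSucc) *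
        HahnSeries.single (l' (Fin.last n)) (tpow A fun i => l' i.castSucc)) = _
    rw [HahnSeries.single_mul_single, tpow_mul_tpow A]
    rfl

/-- The variable `tᵢ` as a unit of `Lⁿ(A)`. -/
def tUnit (A : Type) [CommRing A] (n : ℕ) (i : Fin n) : (IterLaurent A n)ˣ where
  val := tpow A (fun j => if j = i then 1 else 0)
  inv := tpow A (fun j => if j = i then -1 else 0)
  val_inv := by
    rw [tpow_mul_tpow A]
    have : ((fun j : Fin n => if j = i then (1:ℤ) else 0) + fun j => if j = i then -1 else 0)
        = 0 := by funext j; by_cases h : j = i <;> simp [h]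
    rw [this, tpow_zero A]
  inv_val := by
    rw [tpow_mul_tpow A]
    have : ((fun j : Fin n => if j = i then (-1:ℤ) else 0) + fun j => if j = i then 1 else 0)
        = 0 := by funext j; by_cases h : j = i <;> simp [h]
    rw [this, tpow_zero A]

/-- A unit of `A` as a constant unit of `Lⁿ(A)`. -/
def constUnit (A : Type) [CommRing A] (n : ℕ) (a : Aˣ) : (IterLaurent A n)ˣ :=
  Units.map (iterC A n).toMonoidHom a

/-! ### Logarithm and exponential of iterated Laurent series over ℚ-algebras,
characterized coefficientwise. -/

/-- `L` is the logarithm of `f`: its coefficients are given by the (coefficientwise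
convergent) series `log(f) = Σ_{i≥1} (−1)^{i+1}(f−1)^i/i`. -/
def IsLog (A : Type) [CommRing A] [Algebra ℚ A] {n : ℕ} (f L : IterLaurent A n) : Prop :=
  ∀ l : Fin n → ℤ,
    iterCoeff A L l = ∑ᶠ i : ℕ, ((-1 : ℚ) ^ (i + 1) / i) • iterCoeff A ((f - 1) ^ i) l

/-- `E` is the exponential of `h`: its coefficients are given by the (coefficientwise
convergent) series `exp(h) = Σ_{i≥0} h^i/i!`. -/
def IsExp (A : Type) [CommRing A] [Algebra ℚ A] {n : ℕ} (h E : IterLaurent A n) : Prop :=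
  ∀ l : Fin n → ℤ,
    iterCoeff A E l = ∑ᶠ i : ℕ, ((i.factorial : ℚ)⁻¹) • iterCoeff A (h ^ i) l

/-- The exponential `exp(a) = Σ_{k≥0} a^k/k!` of a (nilpotent) element — a finite sum. -/
def expNil (A : Type) [CommRing A] [Algebra ℚ A] (a : A) : A :=
  ∑ᶠ k : ℕ, ((k.factorial : ℚ)⁻¹) • a ^ k

/-! ### The universal power series `φ_{n,j₁…j_q}` of the Contou-Carrère symbol -/

/-- The index set of the variables `x_{i,l}`, `1 ≤ i ≤ p`, `l ∈ ℤⁿ`. -/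
abbrev VarIdx (p n : ℕ) : Type := Fin p × (Fin n → ℤ)

/-- The ideal `m` generated by the variables. -/
def polyIdeal (p n : ℕ) (M' : Finset (VarIdx p n)) :
    Ideal (MvPolynomial {s // s ∈ M'} ℚ) :=
  Ideal.span (Set.range MvPolynomial.X)

/-- `B_{M′,d} = ℚ[x_{i,l} : (i,l) ∈ M′]/m^d`. -/
def BRing (p n : ℕ) (M' : Finset (VarIdx p n)) (d : ℕ) : Type :=
  MvPolynomial {s // s ∈ M'} ℚ ⧸ (polyIdeal p n M') ^ d

instance (p n : ℕ) (M' : Finset (VarIdx p n)) (d : ℕ) : CommRing (BRing p n M' d) :=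
  inferInstanceAs (CommRing (MvPolynomial {s // s ∈ M'} ℚ ⧸ (polyIdeal p n M') ^ d))

instance (p n : ℕ) (M' : Finset (VarIdx p n)) (d : ℕ) : Algebra ℚ (BRing p n M' d) :=
  inferInstanceAs (Algebra ℚ (MvPolynomial {s // s ∈ M'} ℚ ⧸ (polyIdeal p n M') ^ d))

/-- The class of the variable `x_s` in `B_{M′,d}`. -/
def bX (p n : ℕ) (M' : Finset (VarIdx p n)) (d : ℕ) (s : VarIdx p n) (hs : s ∈ M') :
    BRing p n M' d :=
  Ideal.Quotient.mk _ (MvPolynomial.X ⟨s, hs⟩)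

/-- The universal series `fᵢ = 1 + Σ_{l : (i,l) ∈ M′} x_{i,l} t^l ∈ Lⁿ(B_{M′,d})`. -/
def seriesF (p n : ℕ) (M' : Finset (VarIdx p n)) (d : ℕ) (i : Fin p) :
    IterLaurent (BRing p n M' d) n :=
  1 + ∑ s ∈ M'.attach,
    if s.1.1 = i then
      iterC (BRing p n M' d) n (bX p n M' d s.1 s.2) * tpow (BRing p n M' d) s.1.2
    else 0

/-- `log f = Σ_{k≥1} (−1)^{k+1}(f−1)^k/k`, as a finite sum (finsum), meaningful when
`f - 1` is nilpotent. -/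
def logNil (B : Type) [CommRing B] [Algebra ℚ B] {n : ℕ} (f : IterLaurent B n) :
    IterLaurent B n :=
  ∑ᶠ k : ℕ, iterC B n (algebraMap ℚ B ((-1 : ℚ) ^ (k + 1) / k)) * (f - 1) ^ k

/-- The `n×n` matrix whose first `p−1` rows are `(fᵢ⁻¹·∂fᵢ/∂tⱼ)ⱼ` for `i = 2,…,p`, and
whose last `q` rows (indexed by `s = 1,…,q`) have the entry `t_{j_s}⁻¹` in column `j_s`
and `0` elsewhere. -/
def dMat (p n q : ℕ) (hp : 1 ≤ p) (hpq : p + q = n + 1) (j : Fin q → Fin n)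
    (M' : Finset (VarIdx p n)) (d : ℕ) :
    Matrix (Fin n) (Fin n) (IterLaurent (BRing p n M' d) n) :=
  Matrix.of fun r c =>
    if hr : (r : ℕ) < p - 1 then
      Ring.inverse (seriesF p n M' d ⟨(r : ℕ) + 1, by omega⟩) *
        pderivIter (BRing p n M' d) c (seriesF p n M' d ⟨(r : ℕ) + 1, by omega⟩)
    else
      if c = j ⟨(r : ℕ) - (p - 1), by omega⟩ then
        tpow (BRing p n M' d) (fun t => if t = c then (-1 : ℤ) else 0)
      else 0

/-- The element `φ^{(M′,d)} = exp res (log f₁ · det D) ∈ B_{M′,d}`. -/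
def phiMd (p n q : ℕ) (hp : 1 ≤ p) (hpq : p + q = n + 1) (j : Fin q → Fin n)
    (M' : Finset (VarIdx p n)) (d : ℕ) : BRing p n M' d :=
  expNil (BRing p n M' d)
    (iterRes (BRing p n M' d)
      (logNil (BRing p n M' d) (seriesF p n M' d ⟨0, by omega⟩) *
        Matrix.det (dMat p n q hp hpq j M' d)))

theorem projHom_aux (p n : ℕ) (M' M'' : Finset (VarIdx p n)) (hM : M' ⊆ M'') (d d' : ℕ)
    (hd : d ≤ d') :
    ∀ a ∈ (polyIdeal p n M'') ^ d',
      (MvPolynomial.aeval fun s : {s // s ∈ M''} =>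
        if hs : (s : VarIdx p n) ∈ M' then bX p n M' d (↑s) hs else 0) a
        = (0 : BRing p n M' d) := by
  intro a ha
  set φ := (MvPolynomial.aeval (R := ℚ) fun s : {s // s ∈ M''} =>
      if hs : (s : VarIdx p n) ∈ M' then bX p n M' d (↑s) hs else 0) with hφ
  set mk : MvPolynomial {s // s ∈ M'} ℚ →+* BRing p n M' d :=
    Ideal.Quotient.mk ((polyIdeal p n M') ^ d) with hmk
  have hIK : Ideal.map φ.toRingHom (polyIdeal p n M'') ≤
      Ideal.map mk (polyIdeal p n M') := by
    rw [polyIdeal, Ideal.map_span, Ideal.span_le]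
    rintro y ⟨x, ⟨s, rfl⟩, rfl⟩
    by_cases hs : (s : VarIdx p n) ∈ M'
    · have hx : φ.toRingHom (MvPolynomial.X s) =
          mk (MvPolynomial.X ⟨(s : VarIdx p n), hs⟩) := by
        simp [hφ, hmk, bX, hs]
        rfl
      rw [SetLike.mem_coe, hx]
      exact Ideal.mem_map_of_mem mk (Ideal.subset_span ⟨_, rfl⟩)
    · have hx : φ.toRingHom (MvPolynomial.X s) = 0 := by
        simp [hφ, hs]
      rw [SetLike.mem_coe, hx]
      exact zero_mem _
  have h1 : φ a ∈ Ideal.map φ.toRingHom ((polyIdeal p n M'') ^ d') :=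
    Ideal.mem_map_of_mem _ ha
  rw [Ideal.map_pow] at h1
  have h2 := Ideal.pow_right_mono hIK d' h1
  rw [← Ideal.map_pow] at h2
  have h4 := Ideal.map_mono (f := mk) (Ideal.pow_le_pow_right hd) h2
  have h5 : φ a ∈ Ideal.map (Ideal.Quotient.mk ((polyIdeal p n M') ^ d))
      ((polyIdeal p n M') ^ d) := h4
  rw [Ideal.map_quotient_self] at h5
  exact (Ideal.mem_bot).1 h5

/-- The natural projection `B_{M′′,d′} → B_{M′,d}` for `M′ ⊆ M′′` and `d ≤ d′`,
sending `x_s ↦ x_s` for `s ∈ M′` and `x_s ↦ 0` otherwise. -/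
def projHom (p n : ℕ) (M' M'' : Finset (VarIdx p n)) (hM : M' ⊆ M'') (d d' : ℕ)
    (hd : d ≤ d') : BRing p n M'' d' →+* BRing p n M' d :=
  Ideal.Quotient.lift ((polyIdeal p n M'') ^ d')
    ((MvPolynomial.aeval fun s : {s // s ∈ M''} =>
      if hs : (s : VarIdx p n) ∈ M' then bX p n M' d (↑s) hs else 0).toRingHom)
    (projHom_aux p n M' M'' hM d d' hd)

/-- The finite set of exponent functions supported in `M′` with total degree `< d`. -/
def expSet (p n : ℕ) (M' : Finset (VarIdx p n)) (d : ℕ) : Finset (VarIdx p n →₀ ℕ) :=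
  (Finset.image
    (fun g : {s // s ∈ M'} → Fin d =>
      ∑ s ∈ M'.attach, Finsupp.single (s : VarIdx p n) (g s : ℕ))
    Finset.univ).filter
    (fun m => (m.sum fun _ k => k) < d)

/-- The truncation of a power series `Φ` to a polynomial in the variables of `M′` of
total degree `< d`; its image in `B_{M′,d}` is the projection of `Φ`. -/
def truncPoly (p n : ℕ) (M' : Finset (VarIdx p n)) (d : ℕ)
    (Φ : MvPowerSeries (VarIdx p n) ℚ) : MvPolynomial {s // s ∈ M'} ℚ :=
  ∑ m ∈ expSet p n M' d,
    MvPolynomial.monomial (m.subtypeDomain (· ∈ M')) (MvPowerSeries.coeff m Φ)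

/-- `Φ` restricts compatibly to all the `φ^{(M′,d)}`: in each `B_{M′,d}` (with `d ≥ 1`)
the class of the truncation of `Φ` equals `φ^{(M′,d)}`. -/
def IsUniversalCC (p n q : ℕ) (hp : 1 ≤ p) (hpq : p + q = n + 1) (j : Fin q → Fin n)
    (Φ : MvPowerSeries (VarIdx p n) ℚ) : Prop :=
  ∀ (M' : Finset (VarIdx p n)) (d : ℕ), 1 ≤ d →
    Ideal.Quotient.mk ((polyIdeal p n M') ^ d) (truncPoly p n M' d Φ) =
      phiMd p n q hp hpq j M' d

/-! Give the variable `x_{i,l}` the weight `l ∈ ℤⁿ` and `tᵢ` the weight `-eᵢ`. Then every `fᵢ` is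
homogeneous of weight `0`, hence so are `fᵢ⁻¹` (a finite geometric series, `fᵢ - 1` being
nilpotent) and `log f₁`; each entry of column `c` of the matrix, `fᵢ⁻¹ ∂fᵢ/∂t_c` or `t_c⁻¹`, has
weight `e_c`, so the determinant has weight `(1,…,1)`. The residue is the coefficient of
`t^{(-1,…,-1)}`, so it has weight `0` in `B_{M′,d}`, and so does its exponential `φ^{(M′,d)}`.
Finally `m^d` is spanned by monomials of degree `≥ d`, so a monomial of degree `< d` occurring in
`φ_{n,j₁…j_q}` still occurs in `φ^{(M′,d)}`, and therefore has weight `0`. -/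

section IterCoeff

variable {B : Type} [CommRing B]

theorem iterCoeff_succ {n : ℕ} (f : IterLaurent B (n+1)) (l : Fin (n+1) → ℤ) :
    iterCoeff B f l = iterCoeff B (f.down.coeff (l (Fin.last n))) (fun i => l i.castSucc) :=
  rfl

theorem iterCoeff_snoc {n : ℕ} (f : IterLaurent B (n+1)) (l : Fin n → ℤ) (a : ℤ) :
    iterCoeff B f (Fin.snoc l a) = iterCoeff B (f.down.coeff a) l := by
  simp only [iterCoeff_succ, Fin.snoc_last, Fin.snoc_castSucc]

theorem iterCoeff_zero : ∀ {n : ℕ} (l : Fin n → ℤ), iterCoeff B (0 : IterLaurent B n) l = 0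
  | 0, _ => rfl
  | _ + 1, l => iterCoeff_zero (fun i => l i.castSucc)

theorem iterCoeff_add : ∀ {n : ℕ} (f g : IterLaurent B n) (l : Fin n → ℤ),
    iterCoeff B (f + g) l = iterCoeff B f l + iterCoeff B g l
  | 0, _, _, _ => rfl
  | n + 1, f, g, l =>
    iterCoeff_add (f.down.coeff (l (Fin.last n))) (g.down.coeff (l (Fin.last n))) _

theorem iterCoeff_neg {n : ℕ} (f : IterLaurent B n) (l : Fin n → ℤ) :
    iterCoeff B (-f) l = -iterCoeff B f l :=
  eq_neg_of_add_eq_zero_left (by rw [← iterCoeff_add, neg_add_cancel, iterCoeff_zero])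

theorem eq_iff_last_and_castSucc {n : ℕ} {l l' : Fin (n+1) → ℤ} :
    l = l' ↔ l (Fin.last n) = l' (Fin.last n) ∧
      (fun i : Fin n => l i.castSucc) = fun i => l' i.castSucc :=
  ⟨by rintro rfl; exact ⟨rfl, rfl⟩, fun ⟨h, h'⟩ => funext (Fin.lastCases h (congrFun h'))⟩

theorem iterCoeff_up_single {n : ℕ} (a : ℤ) (x : IterLaurent B n) (l : Fin (n+1) → ℤ) :
    iterCoeff B (IterLaurent.up (HahnSeries.single a x)) l =
      if l (Fin.last n) = a then iterCoeff B x (fun i => l i.castSucc) else 0 := by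
  rw [iterCoeff_succ]
  change iterCoeff B ((HahnSeries.single a x).coeff (l (Fin.last n))) _ = _
  rw [HahnSeries.coeff_single]
  split_ifs
  · rfl
  · exact iterCoeff_zero _

theorem iterCoeff_tpow : ∀ {n : ℕ} (l₀ l : Fin n → ℤ),
    iterCoeff B (tpow B l₀) l = if l = l₀ then 1 else 0
  | 0, _, _ => if_pos (Subsingleton.elim _ _) |>.symm
  | n + 1, l₀, l => by
    rw [tpow, iterCoeff_up_single, iterCoeff_tpow, ← ite_and]
    exact if_congr eq_iff_last_and_castSucc.symm rfl rfl

theorem iterCoeff_iterC : ∀ {n : ℕ} (a : B) (l : Fin n → ℤ),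
    iterCoeff B (iterC B n a) l = if l = 0 then a else 0
  | 0, _, _ => if_pos (Subsingleton.elim _ _) |>.symm
  | n + 1, a, l => by
    change iterCoeff B (IterLaurent.up (HahnSeries.single 0 (iterC B n a))) l = _
    rw [iterCoeff_up_single, iterCoeff_iterC, ← ite_and]
    exact if_congr (eq_iff_last_and_castSucc (l' := 0)).symm rfl rfl

end IterCoeff

section Homogeneous

variable {B : Type} {M σ : Type*} [CommRing B] [AddCommGroup M] [SetLike σ B]
  [AddSubgroupClass σ B] (W : M → σ)

/-- For a coefficient ring graded by `W`, the series of degree `s` when each `tᵢ` is given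
degree `-vᵢ`: the coefficient of `t^l` must have degree `∑ lᵢ vᵢ + s`. -/
def homogeneousPart {n : ℕ} (v : Fin n → M) (s : M) : AddSubgroup (IterLaurent B n) where
  carrier := {f | ∀ l, iterCoeff B f l ∈ W (∑ i, l i • v i + s)}
  zero_mem' l := by
    rw [iterCoeff_zero]
    exact zero_mem _
  add_mem' hf hg l := by
    rw [iterCoeff_add]
    exact add_mem (hf l) (hg l)
  neg_mem' hf l := by
    rw [iterCoeff_neg]
    exact neg_mem (hf l)

variable {W}

theorem mem_homogeneousPart_succ {n : ℕ} {v : Fin (n+1) → M} {s : M}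
    {f : IterLaurent B (n+1)} : f ∈ homogeneousPart W v s ↔ ∀ a : ℤ,
      f.down.coeff a ∈ homogeneousPart W (fun i => v i.castSucc) (a • v (Fin.last n) + s) := by
  have weight_snoc (l : Fin n → ℤ) (a : ℤ) : ∑ i, (Fin.snoc l a : Fin (n+1) → ℤ) i • v i + s =
      ∑ i, l i • v i.castSucc + (a • v (Fin.last n) + s) := by
    simp only [Fin.sum_univ_castSucc, Fin.snoc_castSucc, Fin.snoc_last]
    abel
  refine ⟨fun hf a l => ?_, fun hf l => ?_⟩
  · simpa only [iterCoeff_snoc, weight_snoc] using hf (Fin.snoc l a)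
  · have hl := hf (l (Fin.last n)) (Fin.init l)
    rwa [← iterCoeff_snoc, ← weight_snoc, Fin.snoc_init_self] at hl

theorem coeff_mem_homogeneousPart {n : ℕ} {v : Fin (n+1) → M} {s : M}
    {f : IterLaurent B (n+1)} (hf : f ∈ homogeneousPart W v s) (a : ℤ) :
    f.down.coeff a ∈ homogeneousPart W (fun i => v i.castSucc) (a • v (Fin.last n) + s) :=
  mem_homogeneousPart_succ.1 hf a

theorem iterC_mem_homogeneousPart {n : ℕ} (v : Fin n → M) {s : M} {a : B} (ha : a ∈ W s) :
    iterC B n a ∈ homogeneousPart W v s := by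
  intro l
  rw [iterCoeff_iterC]
  split_ifs with h
  · simpa [h] using ha
  · exact zero_mem _

theorem pderivIter_down_coeff {n : ℕ} (j : Fin (n+1)) (f : IterLaurent B (n+1)) (a : ℤ) :
    (pderivIter B j f).down.coeff a =
      if h : (j : ℕ) < n then pderivIter B ⟨j, h⟩ (f.down.coeff a)
      else (a + 1) • f.down.coeff (a + 1) := by
  change ((pderivHom B j : IterLaurent B (n+1) →+ IterLaurent B (n+1)) f).down.coeff a = _
  rw [pderivHom]
  split_ifs <;> rfl

theorem pderivIter_mem_homogeneousPart : ∀ {n : ℕ} {v : Fin n → M} {s : M} (j : Fin n)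
    {f : IterLaurent B n}, f ∈ homogeneousPart W v s →
      pderivIter B j f ∈ homogeneousPart W v (s + v j)
  | 0, _, _, j, _, _ => j.elim0
  | n + 1, v, s, j, f, hf => by
    rw [mem_homogeneousPart_succ]
    intro a
    rw [pderivIter_down_coeff]
    split_ifs with h
    · have hj : v j = v (Fin.castSucc ⟨j, h⟩) := rfl
      rw [← add_assoc, hj]
      exact pderivIter_mem_homogeneousPart _ (coeff_mem_homogeneousPart hf a)
    · obtain rfl : j = Fin.last n := Fin.ext (by simp only [Fin.val_last]; omega)
      convert zsmul_mem (coeff_mem_homogeneousPart hf (a + 1)) (a + 1) using 2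
      rw [add_smul, one_smul]
      abel

theorem iterRes_mem_of_mem_homogeneousPart {n : ℕ} {v : Fin n → M} {f : IterLaurent B n}
    (hf : f ∈ homogeneousPart W v (∑ i, v i)) : iterRes B f ∈ W 0 := by
  simpa [iterRes] using hf (fun _ => -1)

variable [SetLike.GradedMonoid W]

theorem mul_mem_homogeneousPart : ∀ {n : ℕ} {v : Fin n → M} {s s' : M} {f g : IterLaurent B n},
    f ∈ homogeneousPart W v s → g ∈ homogeneousPart W v s' →
      f * g ∈ homogeneousPart W v (s + s')
  | 0, _, _, _, _, _, hf, hg => fun l => by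
    have hfg := SetLike.mul_mem_graded (hf l) (hg l)
    simp only [Finset.univ_eq_empty, Finset.sum_empty, zero_add] at hfg ⊢
    exact hfg
  | n + 1, v, s, s', f, g, hf, hg => by
    rw [mem_homogeneousPart_succ]
    intro a
    change (f.down * g.down).coeff a ∈ _
    rw [HahnSeries.coeff_mul]
    refine sum_mem fun ab hab => ?_
    rw [Finset.mem_antidiagonal] at hab
    convert mul_mem_homogeneousPart (coeff_mem_homogeneousPart hf ab.1)
      (coeff_mem_homogeneousPart hg ab.2) using 2
    rw [← hab.2.2, add_smul]
    abel

theorem one_mem_homogeneousPart {n : ℕ} (v : Fin n → M) :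
    (1 : IterLaurent B n) ∈ homogeneousPart W v 0 := by
  intro l
  rw [← tpow_zero B, iterCoeff_tpow]
  split_ifs with h
  · simpa [h] using SetLike.one_mem_graded W
  · exact zero_mem _

instance homogeneousPart.gradedMonoid {n : ℕ} (v : Fin n → M) :
    SetLike.GradedMonoid (homogeneousPart W v) where
  one_mem := one_mem_homogeneousPart v
  mul_mem _ _ _ _ := mul_mem_homogeneousPart

theorem tpow_mem_homogeneousPart {n : ℕ} (v : Fin n → M) (l₀ : Fin n → ℤ) :
    tpow B l₀ ∈ homogeneousPart W v (-∑ i, l₀ i • v i) := by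
  intro l
  rw [iterCoeff_tpow]
  split_ifs with h
  · simpa [h] using SetLike.one_mem_graded W
  · exact zero_mem _

theorem det_mem_homogeneousPart {n : ℕ} {v : Fin n → M} {ι : Type*} [Fintype ι]
    [DecidableEq ι] {A : Matrix ι ι (IterLaurent B n)} {u : ι → M}
    (hA : ∀ r c, A r c ∈ homogeneousPart W v (u c)) :
    A.det ∈ homogeneousPart W v (∑ c, u c) := by
  rw [Matrix.det_apply]
  refine sum_mem fun τ _ => ?_
  rw [Units.smul_def]
  exact zsmul_mem (SetLike.prod_mem_graded _ _ _ fun c _ => hA (τ c) c) _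

end Homogeneous

theorem Ring.inverse_eq_geom_sum {R : Type*} [CommRing R] {x : R} {d : ℕ}
    (hx : (1 - x) ^ d = 0) : Ring.inverse x = ∑ k ∈ Finset.range d, (1 - x) ^ k := by
  have hmul : x * ∑ k ∈ Finset.range d, (1 - x) ^ k = 1 := by
    simpa [hx] using mul_neg_geom_sum (1 - x) d
  simpa using (Ring.inverse_mul_eq_iff_eq_mul x 1 _ (IsUnit.of_mul_eq_one _ hmul)).2 hmul.symm

section UniversalSeries

variable (p n : ℕ) (M' : Finset (VarIdx p n)) (d : ℕ)

def varWeight {p n : ℕ} {M' : Finset (VarIdx p n)} (s : {s // s ∈ M'}) : Fin n → ℤ :=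
  (s : VarIdx p n).2

def weightSpace (a : Fin n → ℤ) : Submodule ℚ (BRing p n M' d) :=
  (MvPolynomial.weightedHomogeneousSubmodule ℚ varWeight a).map
    (Ideal.Quotient.mkₐ ℚ ((polyIdeal p n M') ^ d)).toLinearMap

instance : SetLike.GradedMonoid (weightSpace p n M' d) where
  one_mem := ⟨1, MvPolynomial.isWeightedHomogeneous_one ℚ _, map_one (Ideal.Quotient.mkₐ ℚ _)⟩
  mul_mem := by
    rintro a b _ _ ⟨x, hx, rfl⟩ ⟨y, hy, rfl⟩
    exact ⟨x * y, hx.mul hy, map_mul (Ideal.Quotient.mkₐ ℚ _) x y⟩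

theorem bX_mem_weightSpace (s : VarIdx p n) (hs : s ∈ M') :
    bX p n M' d s hs ∈ weightSpace p n M' d s.2 :=
  ⟨_, MvPolynomial.isWeightedHomogeneous_X ℚ varWeight ⟨s, hs⟩, rfl⟩

theorem algebraMap_mem_weightSpace (r : ℚ) :
    algebraMap ℚ (BRing p n M' d) r ∈ weightSpace p n M' d 0 := by
  rw [Algebra.algebraMap_eq_smul_one]
  exact Submodule.smul_mem _ r (SetLike.one_mem_graded _)

/-- Series of total weight `a` in `Lⁿ(B_{M′,d})`, where `x_{i,l}` has weight `l` and `tᵢ` has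
weight `-eᵢ`. -/
abbrev weightedSeries (a : Fin n → ℤ) : AddSubgroup (IterLaurent (BRing p n M' d) n) :=
  homogeneousPart (weightSpace p n M' d) (fun i => Pi.single i 1) a

theorem seriesF_mem_weightedSeries (i : Fin p) :
    seriesF p n M' d i ∈ weightedSeries p n M' d 0 := by
  refine add_mem (SetLike.one_mem_graded _) (sum_mem fun s _ => ?_)
  split_ifs
  · have h := SetLike.mul_mem_graded
      (iterC_mem_homogeneousPart _ (bX_mem_weightSpace p n M' d s.1 s.2))
      (tpow_mem_homogeneousPart (W := weightSpace p n M' d) (fun i => Pi.single i 1) s.1.2)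
    rwa [← pi_eq_sum_univ', add_neg_cancel] at h
  · exact zero_mem _

theorem one_sub_seriesF_pow_eq_zero (i : Fin p) : (1 - seriesF p n M' d i) ^ d = 0 := by
  let mk : MvPolynomial {s // s ∈ M'} ℚ →+* BRing p n M' d := Ideal.Quotient.mk _
  have hm : (polyIdeal p n M').map mk ^ d = ⊥ := by
    rw [← Ideal.map_pow]
    exact Ideal.map_quotient_self _
  have hmem : 1 - seriesF p n M' d i ∈
      ((polyIdeal p n M').map mk).map (iterC (BRing p n M' d) n) := by
    rw [seriesF, sub_add_cancel_left, neg_mem_iff]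
    refine sum_mem fun s _ => ?_
    split_ifs
    · exact Ideal.mul_mem_right _ _
        (Ideal.mem_map_of_mem _ (Ideal.mem_map_of_mem _ (Ideal.subset_span ⟨_, rfl⟩)))
    · exact zero_mem _
  have hpow := Ideal.pow_mem_pow hmem d
  rwa [← Ideal.map_pow, hm, Ideal.map_bot, Ideal.mem_bot] at hpow

theorem inverse_seriesF_mem_weightedSeries (i : Fin p) :
    Ring.inverse (seriesF p n M' d i) ∈ weightedSeries p n M' d 0 := by
  rw [Ring.inverse_eq_geom_sum (one_sub_seriesF_pow_eq_zero p n M' d i)]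
  refine sum_mem fun k _ => ?_
  simpa using SetLike.pow_mem_graded k
    (sub_mem (SetLike.one_mem_graded _) (seriesF_mem_weightedSeries p n M' d i))

theorem logNil_mem_weightedSeries {f : IterLaurent (BRing p n M' d) n}
    (hf : f ∈ weightedSeries p n M' d 0) :
    logNil (BRing p n M' d) f ∈ weightedSeries p n M' d 0 :=
  finsum_induction (· ∈ weightedSeries p n M' d 0) (zero_mem _) (fun _ _ => add_mem) fun k => by
    simpa using SetLike.mul_mem_graded
      (iterC_mem_homogeneousPart _ (algebraMap_mem_weightSpace p n M' d _))
      (SetLike.pow_mem_graded k (sub_mem hf (SetLike.one_mem_graded _)))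

variable (q : ℕ) (hp : 1 ≤ p) (hpq : p + q = n + 1) (j : Fin q → Fin n)

theorem dMat_mem_weightedSeries (r c : Fin n) :
    dMat p n q hp hpq j M' d r c ∈ weightedSeries p n M' d (Pi.single c 1) := by
  rw [dMat, Matrix.of_apply]
  split_ifs with hr hc
  · simpa using SetLike.mul_mem_graded (inverse_seriesF_mem_weightedSeries p n M' d _)
      (pderivIter_mem_homogeneousPart c (seriesF_mem_weightedSeries p n M' d _))
  · convert tpow_mem_homogeneousPart (W := weightSpace p n M' d) (fun i => Pi.single i 1)
      (fun t => if t = c then -1 else 0)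
    simp
  · exact zero_mem _

theorem phiMd_mem_weightSpace : phiMd p n q hp hpq j M' d ∈ weightSpace p n M' d 0 := by
  have hprod := SetLike.mul_mem_graded
    (logNil_mem_weightedSeries p n M' d (seriesF_mem_weightedSeries p n M' d ⟨0, by omega⟩))
    (det_mem_homogeneousPart (dMat_mem_weightedSeries p n M' d q hp hpq j))
  rw [zero_add] at hprod
  have hres := iterRes_mem_of_mem_homogeneousPart hprod
  exact finsum_induction (· ∈ weightSpace p n M' d 0) (zero_mem _) (fun _ _ => add_mem)
    fun k => Submodule.smul_mem _ _ (by simpa using SetLike.pow_mem_graded k hres)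

end UniversalSeries

theorem Finsupp.degree_subtypeDomain {α : Type*} {P : α → Prop} [DecidablePred P] {m : α →₀ ℕ}
    (hm : ∀ x ∈ m.support, P x) : (m.subtypeDomain P).degree = m.degree :=
  Finsupp.sum_subtypeDomain_index hm (h := fun _ e => e)

section Truncation

variable {p n : ℕ} {M' : Finset (VarIdx p n)} {d : ℕ}

theorem support_subset_of_mem_expSet {m : VarIdx p n →₀ ℕ} (hm : m ∈ expSet p n M' d) :
    ∀ x ∈ m.support, x ∈ M' := by
  classical
  rw [expSet, Finset.mem_filter, Finset.mem_image] at hm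
  obtain ⟨⟨g, _, rfl⟩, _⟩ := hm
  intro x hx
  obtain ⟨s, _, hs⟩ := Finset.mem_biUnion.1 (Finsupp.support_finsetSum hx)
  rw [Finset.mem_singleton.1 (Finsupp.support_single_subset hs)]
  exact s.2

theorem mem_expSet {m : VarIdx p n →₀ ℕ} (hm : ∀ x ∈ m.support, x ∈ M') (hd : m.degree < d) :
    m ∈ expSet p n M' d := by
  rw [expSet, Finset.mem_filter, Finset.mem_image]
  refine ⟨⟨fun s => ⟨m s, (Finsupp.le_degree (s : VarIdx p n) m).trans_lt hd⟩,
    Finset.mem_univ _, ?_⟩, hd⟩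
  rw [Finset.sum_attach M' fun s => Finsupp.single s (m s),
    ← Finsupp.sum_of_support_subset m hm _ (fun _ _ => Finsupp.single_zero _)]
  exact Finsupp.sum_single m

theorem coeff_truncPoly {m : VarIdx p n →₀ ℕ} (hm : ∀ x ∈ m.support, x ∈ M')
    (hd : m.degree < d) (Φ : MvPowerSeries (VarIdx p n) ℚ) :
    (truncPoly p n M' d Φ).coeff (m.subtypeDomain (· ∈ M')) = MvPowerSeries.coeff m Φ := by
  rw [truncPoly, MvPolynomial.coeff_sum, Finset.sum_eq_single_of_mem m (mem_expSet hm hd)]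
  · rw [MvPolynomial.coeff_monomial, if_pos rfl]
  · intro m' hm' hne
    rw [MvPolynomial.coeff_monomial, if_neg]
    rwa [Finsupp.subtypeDomain_eq_iff (support_subset_of_mem_expSet hm') hm]

theorem weight_varWeight_subtypeDomain {m : VarIdx p n →₀ ℕ} (hm : ∀ x ∈ m.support, x ∈ M') :
    Finsupp.weight varWeight (m.subtypeDomain (· ∈ M')) = m.sum fun s k => (k : ℤ) • s.2 := by
  rw [Finsupp.weight_apply,
    ← Finsupp.sum_subtypeDomain_index (h := fun (s : VarIdx p n) (k : ℕ) => (k : ℤ) • s.2) hm]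
  simp [varWeight]

theorem weight_eq_of_mk_mem_weightSpace {P : MvPolynomial {s // s ∈ M'} ℚ} {a : Fin n → ℤ}
    (hP : Ideal.Quotient.mk _ P ∈ weightSpace p n M' d a) {μ : {s // s ∈ M'} →₀ ℕ}
    (hμ : μ.degree < d) (hc : P.coeff μ ≠ 0) : Finsupp.weight varWeight μ = a := by
  obtain ⟨g, hg, hgP⟩ := hP
  have hsub : P - g ∈ MvPolynomial.idealOfVars {s // s ∈ M'} ℚ ^ d :=
    Ideal.Quotient.eq.1 hgP.symm
  rw [MvPolynomial.mem_pow_idealOfVars_iff'] at hsub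
  refine hg fun hg0 => hc ?_
  simpa [hg0, sub_eq_zero] using hsub μ hμ

end Truncation

theorem statement15_general (n p q : ℕ) (hp : 1 ≤ p) (hpq : p + q = n + 1)
    (j : Fin q → Fin n)
    (Φ : MvPowerSeries (VarIdx p n) ℚ) (hΦ : IsUniversalCC p n q hp hpq j Φ) :
    ∀ m : VarIdx p n →₀ ℕ, MvPowerSeries.coeff m Φ ≠ 0 →
      (m.sum fun s k => (k : ℤ) • s.2) = (0 : Fin n → ℤ) := by
  intro m hm
  have hsupp : ∀ x ∈ m.support, x ∈ m.support := fun _ => id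
  have hdeg : m.degree < m.degree + 1 := Nat.lt_succ_self _
  have hφ := hΦ m.support (m.degree + 1) (Nat.le_add_left 1 _)
  rw [← weight_varWeight_subtypeDomain hsupp]
  refine weight_eq_of_mk_mem_weightSpace (hφ ▸ phiMd_mem_weightSpace ..) ?_ ?_
  · rwa [Finsupp.degree_subtypeDomain hsupp]
  · rwa [coeff_truncPoly hsupp hdeg]

/-- In the setting of the universal power series
`φ_{n,j₁…j_q} ∈ ℚ[[x_{i,l} : 1 ≤ i ≤ p, l ∈ ℤⁿ]]` determined by the compatible system
`(φ^{(M′,d)})`, assign to `x_{i,l}` the weight `l ∈ ℤⁿ`. Then every monomial occurring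
with nonzero coefficient in `φ_{n,j₁…j_q}` has weight `0 ∈ ℤⁿ`. -/
theorem statement15 (n p q : ℕ) (hn : 1 ≤ n) (hp : 1 ≤ p) (hpq : p + q = n + 1)
    (j : Fin q → Fin n) (hj : StrictMono j)
    (Φ : MvPowerSeries (VarIdx p n) ℚ) (hΦ : IsUniversalCC p n q hp hpq j Φ) :
    ∀ m : VarIdx p n →₀ ℕ, MvPowerSeries.coeff m Φ ≠ 0 →
      (m.sum fun s k => (k : ℤ) • s.2) = (0 : Fin n → ℤ) :=
  statement15_general n p q hp hpq j Φ hΦ
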